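/- arXiv:1306.1222 — 5 statements merged into one kernel-verified Lean document; each statement's English description precedes it below -/
import Mathlib

section
/- Let A be a finitely generated additive abelian group and let P be a finitely generated submonoid of A. Then the saturation of P in A, namely P' = {a ∈ A : ∃ n ≥ 1, n • a ∈ P}, is a finitely generated submonoid of A. -/
/-!
If `n • x = ∑ c_a • a` with `a` running over generators `S` of `P`, dividing each `c_a` by `n`
with remainder writes `x` as an `ℕ`-combination of `S` plus a lattice point of the zonotope
`∑_{a ∈ S} [0, 1] • a`. Hence the saturation is generated by these lattice points, and there are
finitely many of them: every homomorphism `A →+ ℤ` is bounded on them, and `A ≃ ℤᵈ × (finite)`.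
-/

open Finset

namespace AddSubmonoid

-- Not Mathlib's `AddSubmonoid.saturation`, which is closure under summands.
def nsmulSaturation_s1 {A : Type*} [AddCommMonoid A] (P : AddSubmonoid A) : AddSubmonoid A where
  carrier := {a | ∃ n : ℕ, 1 ≤ n ∧ n • a ∈ P}
  zero_mem' := ⟨1, le_rfl, by simp⟩
  add_mem' := by
    rintro x y ⟨n, hn, hx⟩ ⟨m, hm, hy⟩
    refine ⟨n * m, Nat.one_le_iff_ne_zero.2 (by positivity), ?_⟩
    rw [smul_add, mul_comm, mul_smul, mul_comm, mul_smul]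
    exact add_mem (nsmul_mem hx m) (nsmul_mem hy n)

end AddSubmonoid

open AddSubmonoid

section Zonotope

variable {A : Type*}

/-- The points of `A` in the zonotope `∑_{a ∈ S} [0, 1] • a`, with rational coefficients written
over a common denominator `n`. -/
def latticeZonotope [AddCommMonoid A] (S : Finset A) : Set A :=
  {b | ∃ n : ℕ, 1 ≤ n ∧ ∃ c : A → ℕ, (∀ a ∈ S, c a ≤ n) ∧ n • b = ∑ a ∈ S, c a • a}

theorem subset_latticeZonotope [AddCommMonoid A] (S : Finset A) :
    (S : Set A) ⊆ latticeZonotope S := by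
  classical
  intro a ha
  refine ⟨1, le_rfl, fun a' => if a' = a then 1 else 0, fun a' _ => ?_, ?_⟩
  · dsimp only; split_ifs <;> simp
  · simp [ite_smul, Finset.mem_coe.1 ha]

theorem latticeZonotope_subset_nsmulSaturation [AddCommMonoid A] (S : Finset A) :
    latticeZonotope S ⊆ (closure (S : Set A)).nsmulSaturation_s1 := by
  rintro b ⟨n, hn, c, -, hb⟩
  exact ⟨n, hn, hb ▸ sum_mem fun a ha => nsmul_mem (subset_closure ha) _⟩

theorem nsmulSaturation_closure_le_closure_latticeZonotope [AddCommGroup A] (S : Finset A) :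
    (closure (S : Set A)).nsmulSaturation_s1 ≤ closure (latticeZonotope S) := by
  classical
  rintro x ⟨n, hn, hx⟩
  obtain ⟨c, -, hc⟩ := mem_closure_finset.1 hx
  set q := ∑ a ∈ S, (c a / n) • a
  have hq : q ∈ closure (latticeZonotope S) :=
    closure_mono (subset_latticeZonotope S) (sum_mem fun a ha => nsmul_mem (subset_closure ha) _)
  have hxq : x - q ∈ latticeZonotope S := by
    refine ⟨n, hn, fun a => c a % n, fun a _ => (Nat.mod_lt _ hn).le, ?_⟩
    rw [smul_sub, ← hc, smul_sum, sub_eq_iff_eq_add', ← sum_add_distrib]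
    refine sum_congr rfl fun a _ => ?_
    rw [smul_smul, ← add_smul, Nat.div_add_mod]
  simpa using add_mem hq (subset_closure hxq)

theorem nsmulSaturation_closure_eq_closure_latticeZonotope [AddCommGroup A] (S : Finset A) :
    (closure (S : Set A)).nsmulSaturation_s1 = closure (latticeZonotope S) :=
  le_antisymm (nsmulSaturation_closure_le_closure_latticeZonotope S)
    (closure_le.2 (latticeZonotope_subset_nsmulSaturation S))

theorem abs_le_of_mem_latticeZonotope [AddCommMonoid A] {S : Finset A} {b : A}
    (hb : b ∈ latticeZonotope S) (f : A →+ ℤ) : |f b| ≤ ∑ a ∈ S, |f a| := by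
  obtain ⟨n, hn, c, hc, hnb⟩ := hb
  have hn0 : (0 : ℤ) < n := by exact_mod_cast hn
  refine le_of_mul_le_mul_left ?_ hn0
  calc (n : ℤ) * |f b| = |f (n • b)| := by
        rw [map_nsmul, nsmul_eq_mul, abs_mul, abs_of_pos hn0]
    _ = |∑ a ∈ S, (c a : ℤ) * f a| := by simp [hnb, map_sum]
    _ ≤ ∑ a ∈ S, (c a : ℤ) * |f a| := by
        refine (abs_sum_le_sum_abs _ _).trans_eq (sum_congr rfl fun a _ => ?_)
        rw [abs_mul, Nat.abs_cast]
    _ ≤ n * ∑ a ∈ S, |f a| := by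
        rw [mul_sum]
        exact sum_le_sum fun a ha => mul_le_mul_of_nonneg_right (by exact_mod_cast hc a ha)
          (abs_nonneg _)

end Zonotope

theorem AddGroup.FG.finite_of_forall_abs_le {A : Type*} [AddCommGroup A] [AddGroup.FG A]
    {s : Set A} (h : ∀ f : A →+ ℤ, ∃ M, ∀ b ∈ s, |f b| ≤ M) : s.Finite := by
  obtain ⟨d, ι, _, p, hp, e, ⟨E⟩⟩ := AddCommGroup.equiv_free_prod_directSum_zmod A
  have : ∀ i, NeZero (p i ^ e i) := fun i => ⟨pow_ne_zero _ (hp i).ne_zero⟩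
  have : Finite (DirectSum ι fun i => ZMod (p i ^ e i)) :=
    Finite.of_equiv _ DFinsupp.equivFunOnFintype.symm
  choose M hM using fun j : Fin d =>
    h ((Finsupp.applyAddHom j).comp ((AddMonoidHom.fst _ _).comp E.toAddMonoidHom))
  have hbox : (Finsupp.equivFunOnFinite ⁻¹' Set.univ.pi fun j => Set.Icc (-M j) (M j)).Finite :=
    (Set.Finite.pi fun j => Set.finite_Icc _ _).preimage Finsupp.equivFunOnFinite.injective.injOn
  refine ((hbox.prod Set.finite_univ).preimage E.injective.injOn).subset fun b hb => ?_
  exact ⟨fun j _ => abs_le.1 (hM j b hb), trivial⟩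

theorem finite_latticeZonotope {A : Type*} [AddCommGroup A] [AddGroup.FG A] (S : Finset A) :
    (latticeZonotope S).Finite :=
  AddGroup.FG.finite_of_forall_abs_le fun f => ⟨_, fun _ hb => abs_le_of_mem_latticeZonotope hb f⟩

/-- If `A` is a finitely generated additive abelian group and `P` is a finitely
generated submonoid of `A`, then the saturation
`P' = {a ∈ A : ∃ n ≥ 1, n • a ∈ P}` of `P` in `A` is a finitely generated
submonoid of `A`. -/
theorem saturation_fg (A : Type*) [AddCommGroup A] [AddGroup.FG A]
    (P : AddSubmonoid A) (hP : P.FG) :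
    ∃ P' : AddSubmonoid A,
      (P' : Set A) = {a : A | ∃ n : ℕ, 1 ≤ n ∧ n • a ∈ P} ∧ P'.FG := by
  obtain ⟨S, rfl⟩ := hP
  refine ⟨(closure (S : Set A)).nsmulSaturation_s1, rfl, (finite_latticeZonotope S).toFinset, ?_⟩
  rw [Set.Finite.coe_toFinset, nsmulSaturation_closure_eq_closure_latticeZonotope]
end

section
/- Let A be an additive abelian group, P a submonoid of A, and ι : A → ℚ ⊗[ℤ] A the canonical map a ↦ 1 ⊗ a into the rationalization of A. For an element a ∈ A, there exists n ≥ 1 with n • a ∈ P if and only if ι(a) lies in the cone spanned by ι(P), i.e. in the submodule of ℚ ⊗[ℤ] A over the semiring of nonnegative rationals generated by the image ι(P) (equivalently, ι(a) is a finite linear combination of elements of ι(P) with nonnegative rational coefficients). -/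
/-!
Clearing denominators, every element of the `ℚ≥0`-cone spanned by an additive submonoid `N` has a
positive multiple in `N`. Applied to `N = ι(P)`, this reduces the theorem to `ι (n • a) = ι p`,
which forces `m • n • a = m • p` for some `m ≥ 1` because the kernel of `ι` is the torsion of `A`.
-/

namespace AddSubmonoid

variable {M : Type*} [AddCommMonoid M] [Module ℚ≥0 M] {N : AddSubmonoid M} {x : M}

theorem exists_nsmul_mem_of_mem_span_nnrat (hx : x ∈ Submodule.span ℚ≥0 (N : Set M)) :
    ∃ n : ℕ, n ≠ 0 ∧ n • x ∈ N := by
  induction hx using Submodule.span_induction with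
  | mem x hx => exact ⟨1, one_ne_zero, by rwa [one_nsmul]⟩
  | zero => exact ⟨1, one_ne_zero, by rw [smul_zero]; exact N.zero_mem⟩
  | add x y _ _ hx hy =>
    obtain ⟨n, hn, hnx⟩ := hx
    obtain ⟨m, hm, hmy⟩ := hy
    refine ⟨n * m, mul_ne_zero hn hm, ?_⟩
    rw [smul_add, mul_nsmul, mul_nsmul']
    exact N.add_mem (N.nsmul_mem hnx m) (N.nsmul_mem hmy n)
  | smul q x _ hx =>
    obtain ⟨n, hn, hnx⟩ := hx
    refine ⟨q.den * n, mul_ne_zero q.den_ne_zero hn, ?_⟩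
    have hclear : (q.den * n) • q • x = q.num • n • x := by
      simp only [← Nat.cast_smul_eq_nsmul ℚ≥0, smul_smul, Nat.cast_mul, mul_right_comm _ _ q,
        q.den_mul_eq_num]
    rw [hclear]
    exact N.nsmul_mem hnx _

theorem mem_span_nnrat_of_nsmul_mem {n : ℕ} (hn : n ≠ 0) (hnx : n • x ∈ N) :
    x ∈ Submodule.span ℚ≥0 (N : Set M) := by
  rw [← inv_smul_smul₀ (Nat.cast_ne_zero.mpr hn : (n : ℚ≥0) ≠ 0) x, Nat.cast_smul_eq_nsmul]
  exact Submodule.smul_mem _ _ (Submodule.subset_span hnx)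

theorem mem_span_nnrat_iff : x ∈ Submodule.span ℚ≥0 (N : Set M) ↔ ∃ n : ℕ, n ≠ 0 ∧ n • x ∈ N :=
  ⟨exists_nsmul_mem_of_mem_span_nnrat, fun ⟨_, hn, hnx⟩ ↦ mem_span_nnrat_of_nsmul_mem hn hnx⟩

end AddSubmonoid

namespace TensorProduct

variable {A : Type*} [AddCommGroup A]

theorem rat_one_tmul_nsmul (n : ℕ) (a : A) : (1 : ℚ) ⊗ₜ[ℤ] (n • a) = n • ((1 : ℚ) ⊗ₜ[ℤ] a) :=
  map_nsmul (TensorProduct.mk ℤ ℚ A 1) n a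

theorem exists_nsmul_eq_of_rat_one_tmul_eq {x y : A} (h : (1 : ℚ) ⊗ₜ[ℤ] x = (1 : ℚ) ⊗ₜ[ℤ] y) :
    ∃ m : ℕ, m ≠ 0 ∧ m • x = m • y := by
  obtain ⟨c, hc⟩ := (IsLocalizedModule.eq_iff_exists (nonZeroDivisors ℤ)
    (TensorProduct.mk ℤ ℚ A 1)).mp h
  refine ⟨(c : ℤ).natAbs, Int.natAbs_ne_zero.mpr (nonZeroDivisors.coe_ne_zero c), ?_⟩
  rw [← sub_eq_zero, ← nsmul_sub, natAbs_nsmul_eq_zero, zsmul_sub, sub_eq_zero]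
  exact hc

end TensorProduct

open TensorProduct in
/-- Let `P` be a submonoid of an additive abelian group `A` and
`ι : A → ℚ ⊗[ℤ] A`, `ι a = 1 ⊗ a`.  An element `a ∈ A` satisfies `n • a ∈ P`
for some `n ≥ 1` if and only if `ι a` lies in the cone spanned by `ι '' P`,
i.e. the `ℚ≥0`-submodule of `ℚ ⊗[ℤ] A` generated by the image of `P`. -/
theorem mem_saturation_iff_mem_rat_cone (A : Type*) [AddCommGroup A]
    (P : AddSubmonoid A) (a : A) :
    (∃ n : ℕ, 1 ≤ n ∧ n • a ∈ P) ↔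
      (1 : ℚ) ⊗ₜ[ℤ] a ∈
        Submodule.span ℚ≥0 ((fun x : A => (1 : ℚ) ⊗ₜ[ℤ] x) '' (P : Set A)) := by
  let ι : A →+ ℚ ⊗[ℤ] A := (TensorProduct.mk ℤ ℚ A 1).toAddMonoidHom
  rw [show (fun x : A => (1 : ℚ) ⊗ₜ[ℤ] x) '' P = P.map ι from (P.coe_map ι).symm,
    AddSubmonoid.mem_span_nnrat_iff]
  simp only [AddSubmonoid.mem_map, Nat.one_le_iff_ne_zero]
  constructor
  · rintro ⟨n, hn, hna⟩
    exact ⟨n, hn, n • a, hna, rat_one_tmul_nsmul n a⟩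
  · rintro ⟨n, hn, p, hp, hpa⟩
    obtain ⟨m, hm, hmpa⟩ :=
      exists_nsmul_eq_of_rat_one_tmul_eq (hpa.trans (rat_one_tmul_nsmul n a).symm)
    refine ⟨m * n, mul_ne_zero hm hn, ?_⟩
    rw [mul_nsmul', ← hmpa]
    exact P.nsmul_mem hp m
end

section
/- Let A be a finitely generated additive abelian group, let ι : A → ℝ ⊗[ℤ] A be the canonical map a ↦ 1 ⊗ a, and let s be a finite subset of A. Then the set {a ∈ A : ι(a) ∈ convexHull ℝ (ι '' s)} is finite, where convexHull ℝ denotes the convex hull in the real vector space ℝ ⊗[ℤ] A. -/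
/-!
Any additive map `q : A →+ F` into a real vector space factors through `ι a = 1 ⊗ a` by base
change, so it maps `{a | ι a ∈ convexHull ℝ (ι '' s)}` into the convex hull of `q '' s`, which
is compact. Writing `A ≃ ℤⁿ × T` with `T` finite, the free coordinates give such a
`q : A → ℝⁿ` under which compact sets have finite preimages, since `ℤⁿ` is discrete and closed
in `ℝⁿ`.
-/

open TensorProduct Filter

theorem Filter.tendsto_fst_cofinite_cofinite (α β : Type*) [Finite β] :
    Tendsto (Prod.fst : α × β → α) cofinite cofinite :=
  Tendsto.cofinite_of_finite_preimage_singleton fun a => by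
    rw [Set.preimage_fst_singleton_eq_range]
    exact Set.finite_range _

theorem Filter.Tendsto.finite_preimage_of_isCompact {X Y : Type*} [TopologicalSpace Y] {f : X → Y}
    (hf : Tendsto f cofinite (cocompact Y)) {K : Set Y} (hK : IsCompact K) : (f ⁻¹' K).Finite := by
  simpa only [mem_map, mem_cofinite, Set.preimage_compl, compl_compl] using
    hf hK.compl_mem_cocompact

theorem tendsto_intCast_pi_cofinite_cocompact (ι : Type*) [Finite ι] :
    Tendsto (fun (v : ι → ℤ) (i : ι) => (v i : ℝ)) cofinite (cocompact (ι → ℝ)) := by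
  rw [← coprodᵢ_cofinite, ← coprodᵢ_cocompact]
  exact Tendsto.pi_map_coprodᵢ fun _ => Int.tendsto_coe_cofinite

theorem AddGroup.FG.exists_addMonoidHom_tendsto_cofinite_cocompact (A : Type*)
    [AddCommGroup A] [AddGroup.FG A] :
    ∃ (n : ℕ) (q : A →+ (Fin n → ℝ)), Tendsto q cofinite (cocompact (Fin n → ℝ)) := by
  obtain ⟨n, ι, _, p, hp, e, ⟨g⟩⟩ := AddCommGroup.equiv_free_prod_directSum_zmod A
  have : ∀ i, NeZero (p i ^ e i) := fun i => ⟨pow_ne_zero _ (hp i).ne_zero⟩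
  have : Finite (DirectSum ι fun i => ZMod (p i ^ e i)) := by
    classical exact Finite.of_fintype (Π₀ i, ZMod (p i ^ e i))
  let freePart : A →+ (Fin n → ℤ) :=
    (Finsupp.coeFnAddHom.comp (AddMonoidHom.fst _ _)).comp g.toAddMonoidHom
  let castPi : (Fin n → ℤ) →+ (Fin n → ℝ) :=
    AddMonoidHom.pi fun i => (Int.castAddHom ℝ).comp (Pi.evalAddMonoidHom _ i)
  refine ⟨n, castPi.comp freePart, ?_⟩
  exact (tendsto_intCast_pi_cofinite_cocompact (Fin n)).comp <|
    (DFunLike.coe_injective.tendsto_cofinite.comp (tendsto_fst_cofinite_cofinite _ _)).comp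
      g.injective.tendsto_cofinite

theorem setOf_one_tmul_mem_convexHull_subset_preimage {A F : Type*} [AddCommGroup A]
    [AddCommGroup F] [Module ℝ F] (q : A →+ F) (s : Set A) :
    {a : A | (1 : ℝ) ⊗ₜ[ℤ] a ∈ convexHull ℝ ((fun x : A => (1 : ℝ) ⊗ₜ[ℤ] x) '' s)} ⊆
      q ⁻¹' convexHull ℝ (q '' s) := by
  intro a (ha : (1 : ℝ) ⊗ₜ[ℤ] a ∈ convexHull ℝ _)
  have := Set.mem_image_of_mem (q.toIntLinearMap.liftBaseChange ℝ) ha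
  rw [LinearMap.image_convexHull, Set.image_image] at this
  simp only [LinearMap.liftBaseChange_tmul, one_smul, AddMonoidHom.coe_toIntLinearMap] at this
  exact this

theorem finite_setOf_one_tmul_mem_convexHull {A F : Type*} [AddCommGroup A] [AddCommGroup F]
    [Module ℝ F] [TopologicalSpace F] [IsTopologicalAddGroup F] [ContinuousSMul ℝ F] (q : A →+ F)
    (hq : Tendsto q cofinite (cocompact F)) {s : Set A} (hs : s.Finite) :
    {a : A | (1 : ℝ) ⊗ₜ[ℤ] a ∈ convexHull ℝ ((fun x : A => (1 : ℝ) ⊗ₜ[ℤ] x) '' s)}.Finite :=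
  (hq.finite_preimage_of_isCompact ((hs.image q).isCompact_convexHull ℝ)).subset
    (setOf_one_tmul_mem_convexHull_subset_preimage q s)

/-- Let `A` be a finitely generated additive abelian group,
`ι : A → ℝ ⊗[ℤ] A`, `ι a = 1 ⊗ a`, and `s` a finite subset of `A`.  Then the
set of elements of `A` whose image under `ι` lies in the convex hull of
`ι '' s` is finite. -/
theorem finite_preimage_convexHull (A : Type*) [AddCommGroup A] [AddGroup.FG A]
    (s : Finset A) :
    {a : A | (1 : ℝ) ⊗ₜ[ℤ] a ∈
      convexHull ℝ ((fun x : A => (1 : ℝ) ⊗ₜ[ℤ] x) '' (s : Set A))}.Finite := by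
  obtain ⟨n, q, hq⟩ := AddGroup.FG.exists_addMonoidHom_tendsto_cofinite_cocompact A
  exact finite_setOf_one_tmul_mem_convexHull q hq s.finite_toSet
end

section
/- Let G and H be additive abelian groups, let P be a submonoid of G that generates G as a group, and let Q be a submonoid of H that generates H as a group and is saturated in H. Let P' = {g ∈ G : ∃ n ≥ 1, n • g ∈ P} be the saturation of P in G. Then every additive monoid homomorphism f : P → Q extends uniquely along the inclusion P ⊆ P' to an additive monoid homomorphism P' → Q; that is, there exists a unique additive monoid homomorphism g : P' → Q whose restriction to P equals f. -/
/-- The saturation `{a ∈ A : ∃ n ≥ 1, n • a ∈ P}` of a submonoid `P` of an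
additive abelian group `A`, as a submonoid of `A`. -/
def AddSubmonoid.nsmulSaturation {A : Type*} [AddCommGroup A] (P : AddSubmonoid A) :
    AddSubmonoid A where
  carrier := {a : A | ∃ n : ℕ, 1 ≤ n ∧ n • a ∈ P}
  zero_mem' := ⟨1, le_refl 1, by simpa using P.zero_mem⟩
  add_mem' := by
    rintro a b ⟨n, hn, ha⟩ ⟨m, hm, hb⟩
    refine ⟨n * m, Nat.one_le_iff_ne_zero.mpr (by positivity), ?_⟩
    have h1 : (n * m) • a = m • (n • a) := by rw [mul_comm, mul_smul]
    have h2 : (n * m) • b = n • (m • b) := by rw [mul_smul]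
    rw [smul_add, h1, h2]
    exact P.add_mem (P.nsmul_mem ha m) (P.nsmul_mem hb n)

/-- `P` is contained in its saturation. -/
theorem AddSubmonoid.le_saturation {A : Type*} [AddCommGroup A]
    (P : AddSubmonoid A) : P ≤ P.nsmulSaturation :=
  fun a ha => ⟨1, le_refl 1, by simpa using ha⟩

/-! Since `P` generates `G`, the group `G` is the group completion of `P`, so `f` extends to a
group homomorphism `F : G →+ H`. If `n • a ∈ P` then `n • F a ∈ Q`, so `F` maps `P'` into the
saturation of `Q`, which is `Q`. Uniqueness: every `s ∈ P'` is a difference `p - q` of elements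
of `P`, so `s + q = p` in `P'`, and `Q` is cancellative. -/

namespace AddSubmonoid

variable {G H : Type*} [AddCommGroup G] [AddCommGroup H]

/-- A submonoid generating `G` as a group makes `G` its group completion. -/
def localizationMapOfGenerates (P : AddSubmonoid G)
    (hPgen : ∀ g : G, ∃ p ∈ P, ∃ q ∈ P, g = p - q) : (⊤ : AddSubmonoid P).LocalizationMap G where
  toAddHom := P.subtype.toAddHom
  isLocalizationMap := isLocalizationMap_of_addGroup Subtype.val_injective fun g => by
    obtain ⟨p, hp, q, hq, rfl⟩ := hPgen g
    exact ⟨⟨p, hp⟩, ⟨q, hq⟩, mem_top _, rfl⟩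

theorem exists_addMonoidHom_extend_of_generates (P : AddSubmonoid G)
    (hPgen : ∀ g : G, ∃ p ∈ P, ∃ q ∈ P, g = p - q) (f : P →+ H) :
    ∃ F : G →+ H, ∀ p : P, F p = f p :=
  ⟨(P.localizationMapOfGenerates hPgen).lift fun _ => AddGroup.isAddUnit _,
    (P.localizationMapOfGenerates hPgen).lift_eq _⟩

theorem nsmulSaturation_le_comap {P : AddSubmonoid G} {Q : AddSubmonoid H} (F : G →+ H)
    (hPQ : P ≤ Q.comap F) : P.nsmulSaturation ≤ Q.nsmulSaturation.comap F := by
  rintro a ⟨n, hn, ha⟩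
  exact ⟨n, hn, map_nsmul F n a ▸ hPQ ha⟩

theorem addMonoidHom_ext_of_generates {M : Type*} [AddMonoid M] [IsRightCancelAdd M]
    {P S : AddSubmonoid G} (hPS : P ≤ S) (hPgen : ∀ g : G, ∃ p ∈ P, ∃ q ∈ P, g = p - q)
    {g₁ g₂ : S →+ M} (h : g₁.comp (inclusion hPS) = g₂.comp (inclusion hPS)) : g₁ = g₂ := by
  ext s
  obtain ⟨p, hp, q, hq, hs⟩ := hPgen s
  have hsq : s + inclusion hPS ⟨q, hq⟩ = inclusion hPS ⟨p, hp⟩ :=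
    Subtype.ext (by simp [hs])
  have hg : ∀ x : P, g₁ (inclusion hPS x) = g₂ (inclusion hPS x) :=
    fun x => DFunLike.congr_fun h x
  refine add_right_cancel (b := g₁ (inclusion hPS ⟨q, hq⟩)) ?_
  rw [← map_add, hsq, hg, hg, ← map_add, hsq]

end AddSubmonoid

theorem saturation_hom_extension_general
    {G H : Type*} [AddCommGroup G] [AddCommGroup H]
    (P : AddSubmonoid G) (hPgen : ∀ g : G, ∃ p ∈ P, ∃ q ∈ P, g = p - q)
    (Q : AddSubmonoid H)
    (hQsat : Q.nsmulSaturation = Q) (f : P →+ Q) :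
    ∃! g : P.nsmulSaturation →+ Q,
      g.comp (AddSubmonoid.inclusion P.le_saturation) = f := by
  obtain ⟨F, hF⟩ := P.exists_addMonoidHom_extend_of_generates hPgen (Q.subtype.comp f)
  have hPQ : P ≤ Q.comap F := fun p hp => by simp [hF ⟨p, hp⟩]
  have hFQ (a : P.nsmulSaturation) : F a ∈ Q :=
    hQsat ▸ AddSubmonoid.nsmulSaturation_le_comap F hPQ a.2
  let g₀ := (F.comp P.nsmulSaturation.subtype).codRestrict Q hFQ
  have hg₀ : g₀.comp (AddSubmonoid.inclusion P.le_saturation) = f := by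
    ext p
    exact hF p
  exact ⟨g₀, hg₀, fun g hg =>
    AddSubmonoid.addMonoidHom_ext_of_generates P.le_saturation hPgen (hg.trans hg₀.symm)⟩

/-- Let `P` be a submonoid of an additive abelian group `G` generating `G` as a
group, and let `Q` be a submonoid of an additive abelian group `H` generating
`H` as a group and saturated in `H`.  Then every additive monoid homomorphism
`f : P → Q` extends uniquely along the inclusion `P ⊆ P'` of `P` into its
saturation to an additive monoid homomorphism `P' → Q`. -/
theorem saturation_hom_extension
    {G H : Type*} [AddCommGroup G] [AddCommGroup H]
    (P : AddSubmonoid G) (hPgen : ∀ g : G, ∃ p ∈ P, ∃ q ∈ P, g = p - q)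
    (Q : AddSubmonoid H) (hQgen : ∀ h : H, ∃ p ∈ Q, ∃ q ∈ Q, h = p - q)
    (hQsat : Q.nsmulSaturation = Q) (f : P →+ Q) :
    ∃! g : P.nsmulSaturation →+ Q,
      g.comp (AddSubmonoid.inclusion P.le_saturation) = f :=
  saturation_hom_extension_general P hPgen Q hQsat f
end

section
/- Let L be a finitely generated free additive abelian group and let P be a finitely generated submonoid of L such that: P generates L as a group; P is sharp, i.e. if p ∈ P and −p ∈ P then p = 0; and P is saturated in L, i.e. every a ∈ L with n • a ∈ P for some n ≥ 1 lies in P. Then the evaluation map e : P → Hom(Hom(P, ℕ), ℕ), defined by e(p)(φ) = φ(p), where Hom denotes additive monoid homomorphisms and ℕ is the additive monoid of natural numbers, is a bijective monoid homomorphism (an isomorphism of commutative monoids). -/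
/-- The evaluation homomorphism `e : P → Hom(Hom(P, ℕ), ℕ)`,
`e p φ = φ p`, for a commutative additive monoid `P`. -/
def evalHom (P : Type*) [AddCommMonoid P] : P →+ ((P →+ ℕ) →+ ℕ) where
  toFun p :=
    { toFun := fun φ => φ p
      map_zero' := rfl
      map_add' := fun φ ψ => rfl }
  map_zero' := by ext φ; exact φ.map_zero
  map_add' := fun p q => by ext φ; exact φ.map_add p q

/-!
The argument runs through the dual cone `P^∨ = {f : Hom(L, ℤ) | f ≥ 0 on P}`.

An integral Farkas lemma, proved by Fourier–Motzkin elimination, shows that for finitely many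
`sᵢ` and `a` in a projective `ℤ`-module either some positive multiple of `a` is an `ℕ`-combination
of the `sᵢ`, or some functional is nonnegative on the `sᵢ` and negative at `a`. For `P` saturated
this gives `P = {a | f a ≥ 0 for all f ∈ P^∨}`, and since `P` generates `L`, restriction
identifies `P^∨` with `Hom(P, ℕ)`. Injectivity of evaluation then follows from sharpness. For
surjectivity, sharpness yields an `f ∈ P^∨` positive on all nonzero generators of `P`, so `P^∨`
generates `Hom(L, ℤ)` as a group; hence a homomorphism `Hom(P, ℕ) → ℕ` extends to
`Hom(L, ℤ) → ℤ`, which is evaluation at some `a ∈ L` because `L` is reflexive, and `a ∈ P` by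
the description of `P` above.
-/

open Module Function

namespace AddSubmonoid

theorem exists_addMonoidHom_comp_subtype_eq {G H : Type*} [AddCommGroup G] [AddCommGroup H]
    (D : AddSubmonoid G) (hD : ∀ g : G, ∃ p ∈ D, ∃ q ∈ D, g = p - q) (ψ : D →+ H) :
    ∃ Ψ : G →+ H, Ψ.comp D.subtype = ψ := by
  choose p hp q hq hpq using hD
  have hwd : ∀ a b c d : D, (a - b : G) = c - d → ψ a - ψ b = ψ c - ψ d := by
    intro a b c d h
    rw [sub_eq_sub_iff_add_eq_add] at h ⊢
    have had : a + d = c + b := Subtype.ext (by simpa using h)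
    rw [← map_add, ← map_add, had]
  refine ⟨AddMonoidHom.mk' (fun g ↦ ψ ⟨p g, hp g⟩ - ψ ⟨q g, hq g⟩) fun x y ↦ ?_,
    AddMonoidHom.ext fun d ↦ ?_⟩
  · rw [hwd _ _ (⟨p x, hp x⟩ + ⟨p y, hp y⟩) (⟨q x, hq x⟩ + ⟨q y, hq y⟩), map_add, map_add]
    · abel
    · simp only [AddSubmonoid.coe_add]
      rw [← hpq, add_sub_add_comm, ← hpq, ← hpq]
  · simpa using hwd ⟨p d, hp d⟩ ⟨q d, hq d⟩ d 0 (by simp [← hpq])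

variable {L : Type*} [AddCommGroup L]

lemma zsmul_mem_of_nonneg (M : AddSubmonoid L) {k : ℤ} (hk : 0 ≤ k) {x : L} (hx : x ∈ M) :
    k • x ∈ M := by
  lift k to ℕ using hk
  rw [natCast_zsmul]
  exact M.nsmul_mem hx k

end AddSubmonoid

open AddSubmonoid in
theorem exists_nsmul_mem_closure_or_exists_dual_neg {L : Type*} [AddCommGroup L]
    [Projective ℤ L] : ∀ {n : ℕ} (v : Fin n → L) (a : L),
      (∃ m : ℕ, 0 < m ∧ m • a ∈ closure (Set.range v)) ∨
        ∃ f : Dual ℤ L, (∀ i, 0 ≤ f (v i)) ∧ f a < 0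
  | 0, v, a => by
    by_cases ha : a = 0
    · exact .inl ⟨1, one_pos, by simp [ha, zero_mem]⟩
    obtain ⟨f, hf⟩ := Projective.exists_dual_ne_zero ℤ ha
    rcases hf.lt_or_gt with h | h
    · exact .inr ⟨f, finZeroElim, h⟩
    · exact .inr ⟨-f, finZeroElim, by simpa using h⟩
  | n + 1, v, a => by
    induction v using Fin.consCases with | _ u w => ?_
    set C := closure (Set.range (Fin.cons u w : Fin (n + 1) → L))
    have hu : u ∈ C := subset_closure (Fin.range_cons u w ▸ Set.mem_insert u _)
    have hw (i : Fin n) : w i ∈ C :=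
      subset_closure (Fin.range_cons u w ▸ Set.mem_insert_of_mem u (Set.mem_range_self i))
    rcases exists_nsmul_mem_closure_or_exists_dual_neg w a with ⟨m, hm, hma⟩ | ⟨f, hfw, hfa⟩
    · exact .inl ⟨m, hm, closure_le.2 (Set.range_subset_iff.2 hw) hma⟩
    rcases le_or_gt 0 (f u) with hfu | hfu
    · exact .inr ⟨f, Fin.cases hfu hfw, hfa⟩
    -- `π` maps into `ker f`, kills `u`, and sends each `w i` to a nonnegative combination of
    -- `w i` and `u`.
    let π : L →ₗ[ℤ] L := (-f u) • LinearMap.id + f.smulRight u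
    have hπ (x : L) : π x = (-f u) • x + f x • u := rfl
    rcases exists_nsmul_mem_closure_or_exists_dual_neg (π ∘ w) (π a) with
      ⟨m, hm, hma⟩ | ⟨g, hgw, hga⟩
    · have hπw : closure (Set.range (π ∘ w)) ≤ C := closure_le.2 <| Set.range_subset_iff.2
        fun i ↦ add_mem (zsmul_mem_of_nonneg C (by omega) (hw i)) (zsmul_mem_of_nonneg C (hfw i) hu)
      refine .inl ⟨m * (-f u).toNat, Nat.mul_pos hm (by omega), ?_⟩
      have : (m * (-f u).toNat) • a = m • π a + (m * -f a) • u := by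
        rw [← natCast_zsmul, hπ]
        push_cast
        rw [Int.toNat_of_nonneg (by omega)]
        module
      rw [this]
      exact add_mem (hπw hma) (zsmul_mem_of_nonneg C (mul_nonneg (by positivity) (by omega)) hu)
    · refine .inr ⟨g ∘ₗ π, Fin.cases ?_ hgw, hga⟩
      simp [hπ]

namespace AddSubmonoid

variable {L : Type*} [AddCommGroup L] {P : AddSubmonoid L}

variable (P) in
noncomputable def intDual : AddSubmonoid (Dual ℤ L) :=
  (PointedCone.dual (Dual.eval ℤ L) P).toAddSubmonoid

lemma mem_intDual {f : Dual ℤ L} : f ∈ P.intDual ↔ ∀ x ∈ P, 0 ≤ f x := Iff.rfl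

lemma mem_intDual_closure {s : Set L} {f : Dual ℤ L} (hf : ∀ x ∈ s, 0 ≤ f x) :
    f ∈ (closure s).intDual := fun x hx ↦ by
  induction hx using closure_induction with
  | mem y hy => exact hf y hy
  | zero => simp
  | add y z _ _ hy hz => rw [map_add]; exact add_nonneg hy hz

variable (P) in
noncomputable def intDualRestrict : P.intDual →+ (P →+ ℕ) where
  toFun f :=
    { toFun p := (f.1 p).toNat
      map_zero' := by simp
      map_add' p q := by
        simp [Int.toNat_add (mem_intDual.1 f.2 p p.2) (mem_intDual.1 f.2 q q.2)] }
  map_zero' := by ext; simp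
  map_add' f g := by
    ext p
    simp [Int.toNat_add (mem_intDual.1 f.2 p p.2) (mem_intDual.1 g.2 p p.2)]

lemma natCast_intDualRestrict_apply (f : P.intDual) (p : P) :
    (P.intDualRestrict f p : ℤ) = f.1 p :=
  Int.toNat_of_nonneg (mem_intDual.1 f.2 p p.2)

lemma intDualRestrict_surjective (hgen : ∀ g : L, ∃ p ∈ P, ∃ q ∈ P, g = p - q) :
    Surjective P.intDualRestrict := by
  intro φ
  obtain ⟨F, hF⟩ := P.exists_addMonoidHom_comp_subtype_eq hgen ((Nat.castAddMonoidHom ℤ).comp φ)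
  have hFP (p : P) : F p = φ p := DFunLike.congr_fun hF p
  refine ⟨⟨F.toIntLinearMap, fun x hx ↦ ?_⟩, AddMonoidHom.ext fun p ↦ ?_⟩
  · simp [hFP ⟨x, hx⟩]
  · simp [intDualRestrict, hFP p]

section

variable [Projective ℤ L] (hfg : P.FG) (hsat : ∀ a : L, ∀ n : ℕ, 1 ≤ n → n • a ∈ P → a ∈ P)
include hfg hsat

theorem mem_of_forall_mem_intDual_nonneg {a : L}
    (ha : ∀ f ∈ P.intDual, 0 ≤ f a) : a ∈ P := by
  obtain ⟨S, rfl, hS⟩ := (fg_iff P).1 hfg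
  obtain ⟨n, v, rfl⟩ := hS.fin_embedding
  rcases exists_nsmul_mem_closure_or_exists_dual_neg v a with ⟨m, hm, hma⟩ | ⟨f, hfv, hfa⟩
  · exact hsat a m hm hma
  · exact absurd (ha f (mem_intDual_closure (Set.forall_mem_range.2 hfv))) hfa.not_ge

variable (hsharp : ∀ p ∈ P, -p ∈ P → p = 0)
include hsharp

theorem exists_mem_intDual_pos {s : L} (hs : s ∈ P) (hs0 : s ≠ 0) :
    ∃ f ∈ P.intDual, 0 < f s := by
  by_contra! h
  refine hs0 (hsharp s hs (mem_of_forall_mem_intDual_nonneg hfg hsat fun f hf ↦ ?_))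
  simpa using h f hf

theorem exists_mem_intDual_sub_eq (g : Dual ℤ L) :
    ∃ u ∈ P.intDual, ∃ w ∈ P.intDual, g = u - w := by
  have hpos (s : L) (hs : s ∈ P) : ∃ f ∈ P.intDual, s ≠ 0 → 0 < f s := by
    by_cases hs0 : s = 0
    · exact ⟨0, zero_mem _, (absurd hs0 ·)⟩
    · obtain ⟨f, hf, hfs⟩ := exists_mem_intDual_pos hfg hsat hsharp hs hs0
      exact ⟨f, hf, fun _ ↦ hfs⟩
  obtain ⟨S, hS⟩ := hfg
  choose F hF hFpos using fun s : S ↦ hpos s (hS ▸ subset_closure s.2)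
  let h := ∑ s, F s
  have hh : h ∈ P.intDual := _root_.sum_mem fun s _ ↦ hF s
  have hhpos (s : S) (hs0 : (s : L) ≠ 0) : 1 ≤ h s := by
    calc 1 ≤ F s s := hFpos s hs0
      _ ≤ h s := by
        rw [LinearMap.sum_apply]
        exact Finset.single_le_sum (fun t _ ↦ mem_intDual.1 (hF t) s (hS ▸ subset_closure s.2))
          (Finset.mem_univ s)
  let N : ℕ := ∑ s : S, (g s).natAbs
  have hgN (s : S) : g s ≤ N := by
    calc g s ≤ (g s).natAbs := Int.le_natAbs
      _ ≤ N := by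
        exact_mod_cast Finset.single_le_sum (f := fun t : S ↦ (g t).natAbs)
          (fun t _ ↦ Nat.zero_le _) (Finset.mem_univ s)
  refine ⟨N • h, nsmul_mem hh N, N • h - g, ?_, by abel⟩
  rw [← hS]
  refine mem_intDual_closure fun s hs ↦ ?_
  rw [LinearMap.sub_apply, LinearMap.smul_apply, sub_nonneg, nsmul_eq_mul]
  by_cases hs0 : s = 0
  · simp [hs0]
  · nlinarith [hhpos ⟨s, hs⟩ hs0, hgN ⟨s, hs⟩]

end

end AddSubmonoid

section

open AddSubmonoid

variable {L : Type*} [AddCommGroup L] [Projective ℤ L] {P : AddSubmonoid L} (hfg : P.FG)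
  (hsat : ∀ a : L, ∀ n : ℕ, 1 ≤ n → n • a ∈ P → a ∈ P) (hsharp : ∀ p ∈ P, -p ∈ P → p = 0)
include hfg hsat hsharp

theorem evalHom_injective : Injective (evalHom P) := by
  intro x y hxy
  have hfxy (f : Dual ℤ L) (hf : f ∈ P.intDual) : f x = f y := by
    simpa [evalHom, natCast_intDualRestrict_apply] using
      congr(($hxy (P.intDualRestrict ⟨f, hf⟩) : ℤ))
  have hsub : (x - y : L) ∈ P :=
    mem_of_forall_mem_intDual_nonneg hfg hsat fun f hf ↦ by simp [hfxy f hf]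
  have hneg : -(x - y : L) ∈ P :=
    mem_of_forall_mem_intDual_nonneg hfg hsat fun f hf ↦ by simp [hfxy f hf]
  exact Subtype.ext (sub_eq_zero.1 (hsharp _ hsub hneg))

theorem evalHom_surjective [IsReflexive ℤ L] (hgen : ∀ g : L, ∃ p ∈ P, ∃ q ∈ P, g = p - q) :
    Surjective (evalHom P) := by
  intro Φ
  obtain ⟨Ψ, hΨ⟩ := P.intDual.exists_addMonoidHom_comp_subtype_eq
    (exists_mem_intDual_sub_eq hfg hsat hsharp)
    ((Nat.castAddMonoidHom ℤ).comp (Φ.comp P.intDualRestrict))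
  let a := (evalEquiv ℤ L).symm Ψ.toIntLinearMap
  have ha (f : P.intDual) : f.1 a = Φ (P.intDualRestrict f) := by
    simpa [a] using DFunLike.congr_fun hΨ f
  have haP : a ∈ P := mem_of_forall_mem_intDual_nonneg hfg hsat fun f hf ↦ by
    simp [ha ⟨f, hf⟩]
  refine ⟨⟨a, haP⟩, AddMonoidHom.ext fun φ ↦ ?_⟩
  obtain ⟨f, rfl⟩ := intDualRestrict_surjective hgen φ
  exact_mod_cast (natCast_intDualRestrict_apply f ⟨a, haP⟩).trans (ha f)

end

/-- Let `L` be a finitely generated free additive abelian group and `P` a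
finitely generated submonoid of `L` which generates `L` as a group, is sharp,
and is saturated in `L`.  Then the evaluation map
`e : P → Hom(Hom(P, ℕ), ℕ)` is a bijective monoid homomorphism. -/
theorem evalHom_bijective
    (L : Type*) [AddCommGroup L] [Module.Free ℤ L] [Module.Finite ℤ L]
    (P : AddSubmonoid L) (hfg : P.FG)
    (hgen : ∀ g : L, ∃ p ∈ P, ∃ q ∈ P, g = p - q)
    (hsharp : ∀ p ∈ P, -p ∈ P → p = 0)
    (hsat : ∀ a : L, ∀ n : ℕ, 1 ≤ n → n • a ∈ P → a ∈ P) :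
    Function.Bijective (evalHom P) :=
  ⟨evalHom_injective hfg hsat hsharp, evalHom_surjective hfg hsat hsharp hgen⟩
end
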